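/- Let s > 0 be a real number and let θ(z, τ) = ∑_{k∈ℤ} exp(iπk²τ)·exp(2iπkz) be Jacobi's theta function (Mathlib's jacobiTheta₂ z τ). Then for z ∈ ℂ, one has θ(z, i·s) = 0 if and only if there exist integers m, n such that z = (m + 1/2) + (n + 1/2)·s·i. -/

import Mathlib

/-!
Pairing the terms `k = j` and `k = -(j + 1)` of the theta series at the half period gives
`θ((1 + τ)/2 + w, τ) = ∑_{j ≥ 0} (-1)^j e^{πiτ j(j+1) - πiw} · 2i sin((2j+1)πw)`.
At `w = 0` every term vanishes, so `θ` vanishes on `(1 + τ)/2 + ℤ + ℤτ` by (quasi-)periodicity.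
Conversely, if `Im τ ≥ 1` and `w` lies in the box `|Re w| ≤ 1/2`, `|Im w| ≤ Im τ / 2` (which meets
every coset of the lattice), then `‖sin((2j+1)x)‖ ≤ (2j+1) e^{2j|Im x|} ‖sin x‖` bounds the `j`-th
term by `(3e^{-π})^j` times the `j = 0` term; as `3e^{-π} < 1/2` the `j = 0` term dominates, so a
zero forces `sin(πw) = 0`, i.e. `w = 0`. For `τ = is` with `s < 1`, the functional equation
`θ(z, τ) ∝ θ(z/τ, -1/τ)` moves the question to `-1/τ = i/s`.
-/

open Complex
open scoped Real

lemma HasSum.eq_zero_of_norm_le_geometric {E : Type*} [NormedAddCommGroup E] {f : ℕ → E} {r : ℝ}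
    (hf : HasSum f 0) (hr₀ : 0 ≤ r) (hr : r < 1 / 2)
    (hle : ∀ j, ‖f (j + 1)‖ ≤ r ^ (j + 1) * ‖f 0‖) : f 0 = 0 := by
  have htail : HasSum (fun j => f (j + 1)) (-f 0) := by
    simpa using (hasSum_nat_add_iff' 1).2 hf
  have hgeom : HasSum (fun j => r ^ (j + 1) * ‖f 0‖) (r / (1 - r) * ‖f 0‖) := by
    simpa [pow_succ', mul_assoc, div_eq_mul_inv] using
      ((hasSum_geometric_of_lt_one hr₀ (by linarith)).mul_left r).mul_right ‖f 0‖
  have hbound := htail.norm_le_of_bounded hgeom hle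
  rw [norm_neg] at hbound
  have hratio : r / (1 - r) < 1 := by rw [div_lt_one (by linarith)]; linarith
  exact norm_eq_zero.1 (by nlinarith [norm_nonneg (f 0)])

lemma three_mul_exp_neg_pi_lt_half : 3 * Real.exp (-π) < 1 / 2 := by
  have h8 : 8 ≤ Real.exp π := calc
    (8 : ℝ) = 2 ^ 3 := by norm_num
    _ ≤ Real.exp 1 ^ 3 := by gcongr; linarith [Real.add_one_le_exp 1]
    _ = Real.exp 3 := by rw [← Real.exp_nat_mul]; norm_num
    _ ≤ Real.exp π := Real.exp_le_exp.2 Real.pi_gt_three.le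
  rw [Real.exp_neg]
  have := inv_anti₀ (by norm_num) h8
  linarith

lemma two_mul_add_one_mul_exp_le_pow {t : ℝ} (ht : 1 ≤ t) (j : ℕ) :
    (2 * j + 1) * Real.exp (-π * t * j ^ 2) ≤ (3 * Real.exp (-π)) ^ j := by
  have hlin : (2 * j + 1 : ℝ) ≤ 3 ^ j := by
    have := one_add_mul_le_pow (by norm_num : (-2 : ℝ) ≤ 2) j
    norm_num at this
    linarith
  have hsq : (j : ℝ) ≤ t * j ^ 2 := by
    rcases Nat.eq_zero_or_pos j with rfl | hj
    · simp
    · have : (1 : ℝ) ≤ j := by exact_mod_cast hj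
      nlinarith
  rw [mul_pow, ← Real.exp_nat_mul]
  refine mul_le_mul hlin (Real.exp_le_exp.2 ?_) (Real.exp_pos _).le (by positivity)
  nlinarith [Real.pi_pos]

namespace Complex

lemma norm_cos_le_exp_abs_im (z : ℂ) : ‖cos z‖ ≤ Real.exp |z.im| := by
  rw [cos, norm_div, RCLike.norm_ofNat, div_le_iff₀ two_pos, mul_two]
  refine (norm_add_le _ _).trans (add_le_add ?_ ?_)
  · simpa [norm_exp] using neg_le_abs z.im
  · simpa [norm_exp] using le_abs_self z.im

lemma norm_sin_nat_succ_mul_le (n : ℕ) (z : ℂ) :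
    ‖sin ((n + 1) * z)‖ ≤ (n + 1) * Real.exp (n * |z.im|) * ‖sin z‖ := by
  induction n with
  | zero => simp
  | succ n ih =>
    have him : |((n + 1 : ℂ) * z).im| = (n + 1) * |z.im| := by
      rw [show ((n + 1 : ℂ) * z).im = (n + 1) * z.im by simp, abs_mul,
        abs_of_nonneg (by positivity)]
    push_cast
    rw [add_mul _ 1, one_mul, sin_add]
    calc ‖sin ((n + 1 : ℂ) * z) * cos z + cos ((n + 1 : ℂ) * z) * sin z‖
        ≤ ‖sin ((n + 1 : ℂ) * z)‖ * ‖cos z‖ + ‖cos ((n + 1 : ℂ) * z)‖ * ‖sin z‖ := by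
          rw [← norm_mul, ← norm_mul]; exact norm_add_le _ _
      _ ≤ (n + 1) * Real.exp (n * |z.im|) * ‖sin z‖ * Real.exp (|z.im|)
          + Real.exp ((n + 1) * |z.im|) * ‖sin z‖ := by
          gcongr
          · exact norm_cos_le_exp_abs_im z
          · exact him ▸ norm_cos_le_exp_abs_im _
      _ = (n + 1 + 1) * Real.exp ((n + 1) * |z.im|) * ‖sin z‖ := by
          rw [add_one_mul _ |z.im|, Real.exp_add]
          ring

end Complex

noncomputable def halfPeriodTerm (τ w : ℂ) (j : ℕ) : ℂ :=
  (-1) ^ j * cexp (π * I * τ * (j * (j + 1)) - π * I * w) * (2 * I * sin ((2 * j + 1) * (π * w)))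

lemma hasSum_halfPeriodTerm {τ : ℂ} (hτ : 0 < τ.im) (w : ℂ) :
    HasSum (halfPeriodTerm τ w) (jacobiTheta₂ ((1 + τ) / 2 + w) τ) := by
  refine (hasSum_jacobiTheta₂_term _ hτ).nat_add_neg_add_one.congr_fun fun j => ?_
  have hsin (a : ℂ) : 2 * I * sin a = cexp (a * I) - cexp (-(a * I)) := by
    rw [sin]; ring_nf; rw [I_sq]; ring
  have hpos : jacobiTheta₂_term j ((1 + τ) / 2 + w) τ = (-1) ^ j *
      cexp (π * I * τ * (j * (j + 1)) - π * I * w + (2 * j + 1) * (π * w) * I) := by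
    rw [← exp_pi_mul_I, ← exp_nat_mul, jacobiTheta₂_term, ← exp_add]
    push_cast
    ring_nf
  have hneg : jacobiTheta₂_term (-(j + 1)) ((1 + τ) / 2 + w) τ = -((-1) ^ j *
      cexp (π * I * τ * (j * (j + 1)) - π * I * w - (2 * j + 1) * (π * w) * I)) := by
    rw [← neg_mul, ← neg_one_mul ((-1 : ℂ) ^ j), ← pow_succ', ← exp_neg_pi_mul_I, ← exp_nat_mul,
      jacobiTheta₂_term, ← exp_add]
    push_cast
    ring_nf
  rw [halfPeriodTerm, hsin, hpos, hneg, sub_eq_add_neg _ ((2 * j + 1) * (π * w) * I), exp_add,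
    exp_add]
  ring

lemma norm_halfPeriodTerm (τ w : ℂ) (j : ℕ) :
    ‖halfPeriodTerm τ w j‖ =
      Real.exp (π * w.im - π * τ.im * (j * (j + 1))) * (2 * ‖sin ((2 * j + 1) * (π * w))‖) := by
  simp only [halfPeriodTerm, norm_mul, norm_pow, norm_neg, norm_exp, norm_I,
    RCLike.norm_ofNat, mul_one]
  congr 2
  simp
  ring

lemma jacobiTheta₂_half_period {τ : ℂ} (hτ : 0 < τ.im) : jacobiTheta₂ ((1 + τ) / 2) τ = 0 := by
  have h := hasSum_halfPeriodTerm hτ 0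
  rw [show halfPeriodTerm τ 0 = 0 from funext fun j => by simp [halfPeriodTerm], add_zero] at h
  exact h.unique hasSum_zero

lemma norm_halfPeriodTerm_le {τ w : ℂ} (hw : |w.im| ≤ τ.im / 2) (j : ℕ) :
    ‖halfPeriodTerm τ w j‖ ≤
      (2 * j + 1) * Real.exp (-π * τ.im * j ^ 2) * ‖halfPeriodTerm τ w 0‖ := by
  have hexp : 2 * j * |(π * w).im| ≤ π * τ.im * j := by
    rw [show (π * w).im = π * w.im by simp, abs_mul, abs_of_pos Real.pi_pos]
    nlinarith [mul_le_mul_of_nonneg_left hw (by positivity : (0 : ℝ) ≤ 2 * j * π)]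
  have hsin : ‖sin ((2 * j + 1) * (π * w))‖ ≤
      (2 * j + 1) * Real.exp (π * τ.im * j) * ‖sin (π * w)‖ := by
    have h := norm_sin_nat_succ_mul_le (2 * j) (π * w)
    push_cast at h
    exact h.trans (by gcongr)
  have h0 : ‖halfPeriodTerm τ w 0‖ = Real.exp (π * w.im) * (2 * ‖sin (π * w)‖) := by
    simpa using norm_halfPeriodTerm τ w 0
  rw [norm_halfPeriodTerm, h0]
  calc Real.exp (π * w.im - π * τ.im * (j * (j + 1))) * (2 * ‖sin ((2 * j + 1) * (π * w))‖)
      ≤ Real.exp (π * w.im - π * τ.im * (j * (j + 1))) *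
          (2 * ((2 * j + 1) * Real.exp (π * τ.im * j) * ‖sin (π * w)‖)) := by gcongr
    _ = (2 * j + 1) * Real.exp (-π * τ.im * j ^ 2) *
          (Real.exp (π * w.im) * (2 * ‖sin (π * w)‖)) := by
        rw [show Real.exp (-π * τ.im * j ^ 2) = Real.exp (π * w.im - π * τ.im * (j * (j + 1))) *
            Real.exp (π * τ.im * j) / Real.exp (π * w.im) by
          rw [← Real.exp_add, ← Real.exp_sub]; ring_nf]
        field_simp

lemma jacobiTheta₂_add_int (z τ : ℂ) (m : ℤ) : jacobiTheta₂ (z + m) τ = jacobiTheta₂ z τ := by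
  simpa using Function.Periodic.int_mul (f := (jacobiTheta₂ · τ)) (jacobiTheta₂_add_left · τ) m z

lemma jacobiTheta₂_add_int_add_int_mul_eq_zero_iff (z τ : ℂ) (m n : ℤ) :
    jacobiTheta₂ (z + m + n * τ) τ = 0 ↔ jacobiTheta₂ z τ = 0 := by
  have hper : Function.Periodic (jacobiTheta₂ · τ = 0) τ := fun z => by
    simp only [jacobiTheta₂_add_left', mul_eq_zero, exp_ne_zero, false_or]
  rw [(hper.int_mul n (z + m)).to_iff, jacobiTheta₂_add_int]

lemma eq_zero_of_jacobiTheta₂_half_period_add_eq_zero {τ w : ℂ} (hτ : 1 ≤ τ.im)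
    (hre : |w.re| ≤ 1 / 2) (him : |w.im| ≤ τ.im / 2)
    (h : jacobiTheta₂ ((1 + τ) / 2 + w) τ = 0) : w = 0 := by
  have hterm : halfPeriodTerm τ w 0 = 0 := by
    refine (h ▸ hasSum_halfPeriodTerm (by linarith) w).eq_zero_of_norm_le_geometric
      (by positivity) three_mul_exp_neg_pi_lt_half fun j => ?_
    exact (norm_halfPeriodTerm_le him _).trans
      (by gcongr; exact_mod_cast two_mul_add_one_mul_exp_le_pow hτ (j + 1))
  obtain ⟨k, hk⟩ : ∃ k : ℤ, π * w = k * π :=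
    sin_eq_zero_iff.1 (by simpa [halfPeriodTerm] using hterm)
  have hwk : w = k := mul_left_cancel₀ (ofReal_ne_zero.2 Real.pi_ne_zero) (hk.trans (mul_comm _ _))
  have hk0 : k = 0 := by
    rw [hwk, intCast_re, ← Int.cast_abs] at hre
    exact Int.abs_lt_one_iff.1 (by exact_mod_cast hre.trans_lt (by norm_num : (1 / 2 : ℝ) < 1))
  rw [hwk, hk0, Int.cast_zero]

lemma exists_eq_half_period_add_lattice {τ : ℂ} (hτ : 0 < τ.im) (z : ℂ) :
    ∃ (m n : ℤ) (w : ℂ), z = (1 + τ) / 2 + w + m + n * τ ∧ |w.re| ≤ 1 / 2 ∧ |w.im| ≤ τ.im / 2 := by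
  set n := round ((z - (1 + τ) / 2).im / τ.im)
  set v := z - (1 + τ) / 2 - n * τ
  refine ⟨round v.re, n, v - round v.re, by ring, by simpa using abs_sub_round v.re, ?_⟩
  have hv : (v - round v.re).im = τ.im * ((z - (1 + τ) / 2).im / τ.im - n) := by
    simp only [v, sub_im, mul_im, intCast_re, intCast_im, zero_mul, add_zero, sub_zero]
    field_simp
  rw [hv, abs_mul, abs_of_pos hτ]
  nlinarith [abs_sub_round ((z - (1 + τ) / 2).im / τ.im)]

lemma exists_int_of_jacobiTheta₂_eq_zero_of_one_le_im {τ z : ℂ} (hτ : 1 ≤ τ.im)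
    (h : jacobiTheta₂ z τ = 0) : ∃ m n : ℤ, z = (1 + τ) / 2 + m + n * τ := by
  obtain ⟨m, n, w, rfl, hre, him⟩ := exists_eq_half_period_add_lattice (by linarith) z
  rw [jacobiTheta₂_add_int_add_int_mul_eq_zero_iff] at h
  exact ⟨m, n, by rw [eq_zero_of_jacobiTheta₂_half_period_add_eq_zero hτ hre him h, add_zero]⟩

lemma jacobiTheta₂_eq_zero_iff_div {τ : ℂ} (hτ : τ ≠ 0) (z : ℂ) :
    jacobiTheta₂ z τ = 0 ↔ jacobiTheta₂ (z / τ) (-1 / τ) = 0 := by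
  rw [jacobiTheta₂_functional_equation z τ]
  simp [hτ, cpow_eq_zero_iff, exp_ne_zero]

lemma exists_int_of_jacobiTheta₂_eq_zero_of_one_le_im_neg_one_div {τ z : ℂ} (hτ : 1 ≤ (-1 / τ).im)
    (h : jacobiTheta₂ z τ = 0) : ∃ m n : ℤ, z = (1 + τ) / 2 + m + n * τ := by
  have hτ₀ : τ ≠ 0 := by rintro rfl; norm_num at hτ
  obtain ⟨m, n, hmn⟩ := exists_int_of_jacobiTheta₂_eq_zero_of_one_le_im hτ
    ((jacobiTheta₂_eq_zero_iff_div hτ₀ z).1 h)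
  refine ⟨-n - 1, m, ?_⟩
  rw [div_eq_iff hτ₀] at hmn
  rw [hmn]
  field_simp
  push_cast
  ring

theorem jacobiTheta₂_eq_zero_iff (s : ℝ) (hs : 0 < s) (z : ℂ) :
    jacobiTheta₂ z (Complex.I * s) = 0 ↔
      ∃ m n : ℤ, z = ((m : ℂ) + 1 / 2) + ((n : ℂ) + 1 / 2) * s * Complex.I := by
  have hτ : 0 < (I * s).im := by simpa using hs
  constructor
  · intro h
    obtain ⟨m, n, rfl⟩ : ∃ m n : ℤ, z = (1 + I * s) / 2 + m + n * (I * s) := by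
      rcases le_or_gt 1 s with hs₁ | hs₁
      · exact exists_int_of_jacobiTheta₂_eq_zero_of_one_le_im (by simpa using hs₁) h
      · refine exists_int_of_jacobiTheta₂_eq_zero_of_one_le_im_neg_one_div ?_ h
        rw [show -1 / (I * s) = I * (s⁻¹ : ℝ) by push_cast; field_simp; rw [I_sq]; ring]
        simpa using (one_le_inv₀ hs).2 hs₁.le
    exact ⟨m, n, by ring⟩
  · rintro ⟨m, n, rfl⟩
    convert (jacobiTheta₂_add_int_add_int_mul_eq_zero_iff _ _ m n).2 (jacobiTheta₂_half_period hτ)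
      using 2
    ring
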